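/- Let H and M be separable real Hilbert spaces, κ ∈ (0,1), and N, β > 0. Then there exists a constant C > 0, depending only on N and β, such that for all Borel probability measures ν₁, ν₂, ν₃ on H × M, W_{d^{με}_{N,β/2}}(ν₁, ν₃) ≤ C ( W_{d^{με}_{N,β}}(ν₁, ν₂) + W_{d^{με}_{N,β}}(ν₂, ν₃) ), where W_d denotes the coupling distance associated with the cost d. -/

import Mathlib

open MeasureTheory
open scoped ENNReal

noncomputable section

variable {H M : Type*} [NormedAddCommGroup H] [InnerProductSpace ℝ H]
  [NormedAddCommGroup M] [InnerProductSpace ℝ M]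

/-- `Ψ₀(u,η) = ½‖u‖² + ½(1-κ)‖η‖²`. -/
def psi0 (κ : ℝ) (U : H × M) : ℝ :=
  (1 / 2) * ‖U.1‖ ^ 2 + (1 / 2) * (1 - κ) * ‖U.2‖ ^ 2

/-- The `ℓ²`-product norm `‖(u,η)‖ = (‖u‖² + ‖η‖²)^{1/2}` on `H × M`. -/
def prodNormL2 (U : H × M) : ℝ := Real.sqrt (‖U.1‖ ^ 2 + ‖U.2‖ ^ 2)

/-- The distance-like function `d^{με}_{N,β}` on `H × M`. -/
def dEps (κ N β : ℝ) (U V : H × M) : ℝ :=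
  Real.sqrt (min (N * prodNormL2 (U - V)) 1 *
    (1 + Real.exp (β * psi0 κ U) + Real.exp (β * psi0 κ V)))

/-- The coupling (Wasserstein-type) distance associated with a cost `d`. -/
def Wd {E : Type*} [MeasurableSpace E] (μ ν : Measure E) (d : E → E → ℝ) : ℝ≥0∞ :=
  sInf { r : ℝ≥0∞ | ∃ π : Measure (E × E), IsProbabilityMeasure π ∧
    π.map Prod.fst = μ ∧ π.map Prod.snd = ν ∧
    r = ∫⁻ p, ENNReal.ofReal (d p.1 p.2) ∂π }

/-! The cost `d_{β/2}` satisfies a relaxed triangle inequality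
`d_{β/2}(U, W) ≤ C (d_β(U, V) + d_β(V, W))` pointwise. Since `min (N‖·‖) 1` is subadditive, only the
cross terms `min (N‖U - V‖) 1 · exp (β Ψ₀(W) / 2)` need care: either `N‖V - W‖ ≥ 1`, and the term is
dominated by `d_β(V, W)²`, or `W` is `1/N`-close to `V`, and the quadratic form `Ψ₀` gives
`Ψ₀(W) / 2 ≤ Ψ₀(V) + 1 / (2N²)`, so the term is dominated by `d_β(U, V)²`. Gluing any coupling of
`(ν₁, ν₂)` with any coupling of `(ν₂, ν₃)` along `ν₂` (by disintegration, `H × M` being standard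
Borel) transfers the pointwise inequality to the coupling distances. -/

open ProbabilityTheory

section Pointwise

omit [InnerProductSpace ℝ H] [InnerProductSpace ℝ M]

variable {κ N β : ℝ}

lemma psi0_nonneg (hκ : κ ≤ 1) (U : H × M) : 0 ≤ psi0 κ U := by
  have := sub_nonneg.2 hκ
  unfold psi0
  positivity

lemma psi0_add_le (hκ : κ ≤ 1) (U V : H × M) :
    psi0 κ (U + V) ≤ 2 * psi0 κ U + 2 * psi0 κ V := by
  have h₁ : ‖U.1 + V.1‖ ^ 2 ≤ 2 * ‖U.1‖ ^ 2 + 2 * ‖V.1‖ ^ 2 := by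
    nlinarith [norm_add_le U.1 V.1, norm_nonneg (U.1 + V.1), sq_nonneg (‖U.1‖ - ‖V.1‖)]
  have h₂ : ‖U.2 + V.2‖ ^ 2 ≤ 2 * ‖U.2‖ ^ 2 + 2 * ‖V.2‖ ^ 2 := by
    nlinarith [norm_add_le U.2 V.2, norm_nonneg (U.2 + V.2), sq_nonneg (‖U.2‖ - ‖V.2‖)]
  unfold psi0
  simp only [Prod.fst_add, Prod.snd_add]
  nlinarith [mul_le_mul_of_nonneg_left h₂ (by linarith : (0 : ℝ) ≤ 1 - κ)]

lemma psi0_le_half_sq_prodNormL2 (hκ : 0 ≤ κ) (U : H × M) :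
    psi0 κ U ≤ prodNormL2 U ^ 2 / 2 := by
  rw [prodNormL2, Real.sq_sqrt (by positivity), psi0]
  nlinarith [sq_nonneg ‖U.2‖]

lemma prodNormL2_nonneg (U : H × M) : 0 ≤ prodNormL2 U := Real.sqrt_nonneg _

lemma min_mul_prodNormL2_nonneg (hN : 0 ≤ N) (U : H × M) : 0 ≤ min (N * prodNormL2 U) 1 :=
  le_min (mul_nonneg hN (prodNormL2_nonneg U)) zero_le_one

lemma prodNormL2_eq_norm_toLp (U : H × M) : prodNormL2 U = ‖WithLp.toLp 2 U‖ := by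
  rw [WithLp.prod_norm_eq_of_L2]; rfl

lemma prodNormL2_sub_comm (U V : H × M) : prodNormL2 (U - V) = prodNormL2 (V - U) := by
  simp only [prodNormL2_eq_norm_toLp, WithLp.toLp_sub, norm_sub_rev]

lemma prodNormL2_sub_le (U V W : H × M) :
    prodNormL2 (U - W) ≤ prodNormL2 (U - V) + prodNormL2 (V - W) := by
  simp only [prodNormL2_eq_norm_toLp, WithLp.toLp_sub]
  exact norm_sub_le_norm_sub_add_norm_sub _ _ _

lemma min_add_le_min_add_min {x y : ℝ} (hx : 0 ≤ x) (hy : 0 ≤ y) :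
    min (x + y) 1 ≤ min x 1 + min y 1 := by
  rcases le_total x 1 with hx1 | hx1 <;> rcases le_total y 1 with hy1 | hy1 <;>
    simp [*]

lemma exp_half_psi0_le_of_close (hκ : κ ∈ Set.Icc (0 : ℝ) 1) (hN : 0 < N) (hβ : 0 ≤ β)
    {V W : H × M} (h : N * prodNormL2 (W - V) ≤ 1) :
    Real.exp (β / 2 * psi0 κ W) ≤ Real.exp (β / (2 * N ^ 2)) * Real.exp (β * psi0 κ V) := by
  have hclose : prodNormL2 (W - V) ^ 2 ≤ 1 / N ^ 2 := by
    rw [← one_div_pow]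
    exact pow_le_pow_left₀ (prodNormL2_nonneg _) ((le_div_iff₀' hN).2 h) 2
  have hsplit : psi0 κ W ≤ 2 * psi0 κ V + 2 * psi0 κ (W - V) := by
    simpa using psi0_add_le hκ.2 V (W - V)
  rw [← Real.exp_add]
  gcongr
  calc β / 2 * psi0 κ W ≤ β * psi0 κ V + β * psi0 κ (W - V) := by nlinarith
    _ ≤ β * psi0 κ V + β * (1 / N ^ 2 / 2) := by
        gcongr
        exact (psi0_le_half_sq_prodNormL2 hκ.1 _).trans (by linarith)
    _ = _ := by field_simp; ring

lemma exp_half_psi0_le (hκ : κ ≤ 1) (hβ : 0 ≤ β) (U : H × M) :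
    Real.exp (β / 2 * psi0 κ U) ≤ Real.exp (β * psi0 κ U) :=
  Real.exp_le_exp.2 (mul_le_mul_of_nonneg_right (by linarith) (psi0_nonneg hκ U))

lemma mul_exp_half_psi0_le (hκ : κ ∈ Set.Icc (0 : ℝ) 1) (hN : 0 < N) (hβ : 0 ≤ β)
    {a : ℝ} (ha₀ : 0 ≤ a) (ha₁ : a ≤ 1) (V W : H × M) :
    a * Real.exp (β / 2 * psi0 κ W) ≤ Real.exp (β / (2 * N ^ 2)) *
      (a * Real.exp (β * psi0 κ V) + min (N * prodNormL2 (V - W)) 1 * Real.exp (β * psi0 κ W)) := by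
  have hE : 1 ≤ Real.exp (β / (2 * N ^ 2)) := Real.one_le_exp (by positivity)
  rcases le_or_gt 1 (N * prodNormL2 (V - W)) with hfar | hclose
  · rw [min_eq_right hfar, one_mul]
    calc a * Real.exp (β / 2 * psi0 κ W) ≤ Real.exp (β / 2 * psi0 κ W) :=
          mul_le_of_le_one_left (Real.exp_nonneg _) ha₁
      _ ≤ Real.exp (β * psi0 κ W) := exp_half_psi0_le hκ.2 hβ W
      _ ≤ a * Real.exp (β * psi0 κ V) + Real.exp (β * psi0 κ W) :=
          le_add_of_nonneg_left (by positivity)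
      _ ≤ _ := le_mul_of_one_le_left (by positivity) hE
  · have hW := exp_half_psi0_le_of_close hκ hN hβ
      (by rw [prodNormL2_sub_comm]; exact hclose.le : N * prodNormL2 (W - V) ≤ 1)
    calc a * Real.exp (β / 2 * psi0 κ W)
        ≤ a * (Real.exp (β / (2 * N ^ 2)) * Real.exp (β * psi0 κ V)) := by gcongr
      _ = Real.exp (β / (2 * N ^ 2)) * (a * Real.exp (β * psi0 κ V)) := by ring
      _ ≤ _ := by
          gcongr
          exact le_add_of_nonneg_right
            (mul_nonneg (min_mul_prodNormL2_nonneg hN.le _) (Real.exp_nonneg _))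

lemma dEps_nonneg (U V : H × M) : 0 ≤ dEps κ N β U V := Real.sqrt_nonneg _

lemma sq_dEps (hN : 0 ≤ N) (U V : H × M) :
    dEps κ N β U V ^ 2 = min (N * prodNormL2 (U - V)) 1 *
      (1 + Real.exp (β * psi0 κ U) + Real.exp (β * psi0 κ V)) :=
  Real.sq_sqrt (mul_nonneg (min_mul_prodNormL2_nonneg hN _) (by positivity))

lemma sq_dEps_half_le (hκ : κ ∈ Set.Icc (0 : ℝ) 1) (hN : 0 < N) (hβ : 0 ≤ β) (U V W : H × M) :
    dEps κ N (β / 2) U W ^ 2 ≤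
      (1 + Real.exp (β / (2 * N ^ 2))) * (dEps κ N β U V ^ 2 + dEps κ N β V W ^ 2) := by
  have hcrossW := mul_exp_half_psi0_le hκ hN hβ
    (min_mul_prodNormL2_nonneg hN.le (U - V)) (min_le_right _ _) V W
  have hcrossU := mul_exp_half_psi0_le hκ hN hβ
    (min_mul_prodNormL2_nonneg hN.le (V - W)) (min_le_right _ _) V U
  rw [← prodNormL2_sub_comm U V] at hcrossU
  have hc : min (N * prodNormL2 (U - W)) 1 ≤
      min (N * prodNormL2 (U - V)) 1 + min (N * prodNormL2 (V - W)) 1 := by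
    refine (min_le_min_right 1 ?_).trans (min_add_le_min_add_min
      (mul_nonneg hN.le (prodNormL2_nonneg _)) (mul_nonneg hN.le (prodNormL2_nonneg _)))
    rw [← mul_add]
    exact mul_le_mul_of_nonneg_left (prodNormL2_sub_le U V W) hN.le
  rw [sq_dEps hN.le, sq_dEps hN.le, sq_dEps hN.le]
  set a := min (N * prodNormL2 (U - V)) 1
  set b := min (N * prodNormL2 (V - W)) 1
  have ha₀ : 0 ≤ a := min_mul_prodNormL2_nonneg hN.le _
  have hb₀ : 0 ≤ b := min_mul_prodNormL2_nonneg hN.le _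
  have hU := exp_half_psi0_le hκ.2 hβ U
  have hW := exp_half_psi0_le hκ.2 hβ W
  have hE : 0 ≤ Real.exp (β / (2 * N ^ 2)) := Real.exp_nonneg _
  nlinarith [mul_le_mul_of_nonneg_right hc (by positivity :
      0 ≤ 1 + Real.exp (β / 2 * psi0 κ U) + Real.exp (β / 2 * psi0 κ W)),
    mul_le_mul_of_nonneg_left hU ha₀, mul_le_mul_of_nonneg_left hW hb₀,
    mul_nonneg ha₀ (Real.exp_nonneg (β * psi0 κ V)),
    mul_nonneg hb₀ (Real.exp_nonneg (β * psi0 κ V)),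
    mul_nonneg hE ha₀, mul_nonneg hE hb₀]

lemma dEps_half_le (hκ : κ ∈ Set.Icc (0 : ℝ) 1) (hN : 0 < N) (hβ : 0 ≤ β) (U V W : H × M) :
    dEps κ N (β / 2) U W ≤
      √(1 + Real.exp (β / (2 * N ^ 2))) * (dEps κ N β U V + dEps κ N β V W) := by
  have hUV : 0 ≤ dEps κ N β U V := dEps_nonneg U V
  have hVW : 0 ≤ dEps κ N β V W := dEps_nonneg V W
  rw [← pow_le_pow_iff_left₀ (dEps_nonneg U W) (by positivity) two_ne_zero, mul_pow,
    Real.sq_sqrt (by positivity)]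
  calc _ ≤ _ := sq_dEps_half_le hκ hN hβ U V W
    _ ≤ _ := by gcongr; nlinarith [mul_nonneg hUV hVW]

lemma continuous_dEps : Continuous fun p : (H × M) × (H × M) => dEps κ N β p.1 p.2 := by
  unfold dEps prodNormL2 psi0
  fun_prop

end Pointwise

lemma MeasureTheory.Measure.map_prodMap_compProd_comap {α β γ : Type*} [MeasurableSpace α]
    [MeasurableSpace β] [MeasurableSpace γ] (μ : Measure α) [SFinite μ] (κ : Kernel β γ)
    [IsSFiniteKernel κ] {f : α → β} (hf : Measurable f) :
    (μ ⊗ₘ κ.comap f hf).map (Prod.map f id) = μ.map f ⊗ₘ κ := by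
  ext s hs
  rw [Measure.map_apply (hf.prodMap measurable_id) hs,
    Measure.compProd_apply (hf.prodMap measurable_id hs), Measure.compProd_apply hs,
    lintegral_map (Kernel.measurable_kernel_prodMk_left hs) hf]
  rfl

lemma exists_gluing {α β γ : Type*} [MeasurableSpace α] [MeasurableSpace β]
    [MeasurableSpace γ] [StandardBorelSpace γ] [Nonempty γ]
    (π₁₂ : Measure (α × β)) (π₂₃ : Measure (β × γ)) [IsProbabilityMeasure π₁₂]
    [IsFiniteMeasure π₂₃] (h : π₁₂.map Prod.snd = π₂₃.map Prod.fst) :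
    ∃ π : Measure ((α × β) × γ), IsProbabilityMeasure π ∧
      π.map Prod.fst = π₁₂ ∧ π.map (Prod.map Prod.snd id) = π₂₃ := by
  refine ⟨π₁₂ ⊗ₘ π₂₃.condKernel.comap Prod.snd measurable_snd, inferInstance,
    Measure.fst_compProd _ _, ?_⟩
  rw [Measure.map_prodMap_compProd_comap, h]
  exact π₂₃.disintegrate π₂₃.condKernel

lemma le_Wd_add_Wd {E : Type*} [MeasurableSpace E] {ν₁ ν₂ ν₃ : Measure E} {d : E → E → ℝ}
    {x : ℝ≥0∞}
    (h : ∀ π₁₂ π₂₃ : Measure (E × E), IsProbabilityMeasure π₁₂ → IsProbabilityMeasure π₂₃ →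
      π₁₂.map Prod.fst = ν₁ → π₁₂.map Prod.snd = ν₂ →
      π₂₃.map Prod.fst = ν₂ → π₂₃.map Prod.snd = ν₃ →
      x ≤ (∫⁻ p, ENNReal.ofReal (d p.1 p.2) ∂π₁₂) + ∫⁻ p, ENNReal.ofReal (d p.1 p.2) ∂π₂₃) :
    x ≤ Wd ν₁ ν₂ d + Wd ν₂ ν₃ d := by
  simp only [Wd, sInf_eq_iInf]
  refine ENNReal.le_iInf₂_add_iInf₂ ?_
  rintro _ ⟨π₁₂, h₁₂, h₁, h₂, rfl⟩ _ ⟨π₂₃, h₂₃, h₂', h₃, rfl⟩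
  exact h π₁₂ π₂₃ h₁₂ h₂₃ h₁ h₂ h₂' h₃

theorem Wd_le_mul_add {E : Type*} [MeasurableSpace E] [StandardBorelSpace E] [Nonempty E]
    {ν₁ ν₂ ν₃ : Measure E} {d d' : E → E → ℝ} (hd : Measurable fun p : E × E => d p.1 p.2)
    {C : ℝ} (hC : 0 < C) (h : ∀ x y z, d' x z ≤ C * (d x y + d y z)) :
    Wd ν₁ ν₃ d' ≤ ENNReal.ofReal C * (Wd ν₁ ν₂ d + Wd ν₂ ν₃ d) := by
  have hd' : Measurable fun p : E × E => ENNReal.ofReal (d p.1 p.2) := hd.ennreal_ofReal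
  have hC₀ : ENNReal.ofReal C ≠ 0 := by simpa using hC
  rw [← ENNReal.div_le_iff' hC₀ ENNReal.ofReal_ne_top]
  refine le_Wd_add_Wd fun π₁₂ π₂₃ _ _ h₁ h₂ h₂' h₃ => ?_
  obtain ⟨π, _, hπ₁₂, hπ₂₃⟩ := exists_gluing π₁₂ π₂₃ (h₂.trans h₂'.symm)
  rw [ENNReal.div_le_iff' hC₀ ENNReal.ofReal_ne_top]
  have hfst : (π.map (Prod.map Prod.fst id)).map Prod.fst = ν₁ := by
    rw [Measure.map_map measurable_fst (measurable_fst.prodMap measurable_id),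
      ← h₁, ← hπ₁₂, Measure.map_map measurable_fst measurable_fst]; rfl
  have hsnd : (π.map (Prod.map Prod.fst id)).map Prod.snd = ν₃ := by
    rw [Measure.map_map measurable_snd (measurable_fst.prodMap measurable_id),
      ← h₃, ← hπ₂₃, Measure.map_map measurable_snd (measurable_snd.prodMap measurable_id)]; rfl
  calc Wd ν₁ ν₃ d' ≤ ∫⁻ p, ENNReal.ofReal (d' p.1 p.2) ∂π.map (Prod.map Prod.fst id) :=
        sInf_le ⟨_, Measure.isProbabilityMeasure_map (by fun_prop), hfst, hsnd, rfl⟩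
    _ ≤ ∫⁻ q, ENNReal.ofReal (d' q.1.1 q.2) ∂π := lintegral_map_le _ _
    _ ≤ ∫⁻ q, ENNReal.ofReal C *
          (ENNReal.ofReal (d q.1.1 q.1.2) + ENNReal.ofReal (d q.1.2 q.2)) ∂π := by
        refine lintegral_mono fun q => ?_
        calc ENNReal.ofReal (d' q.1.1 q.2)
            ≤ ENNReal.ofReal (C * (d q.1.1 q.1.2 + d q.1.2 q.2)) :=
              ENNReal.ofReal_le_ofReal (h _ _ _)
          _ = ENNReal.ofReal C * ENNReal.ofReal (d q.1.1 q.1.2 + d q.1.2 q.2) :=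
              ENNReal.ofReal_mul hC.le
          _ ≤ _ := by gcongr; exact ENNReal.ofReal_add_le
    _ = _ := by
        rw [lintegral_const_mul' _ _ ENNReal.ofReal_ne_top,
          lintegral_add_left (f := fun q : (E × E) × E => ENNReal.ofReal (d q.1.1 q.1.2))
            (hd'.comp measurable_fst), ← hπ₁₂, ← hπ₂₃, lintegral_map hd' measurable_fst,
          lintegral_map hd' (measurable_snd.prodMap measurable_id)]
        rfl

/-- Generalized triangle inequality for the coupling distances
associated with `d^{με}_{N,β}` on `H × M`. -/
theorem Wd_dEps_triangle
    [CompleteSpace H] [TopologicalSpace.SeparableSpace H]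
    [MeasurableSpace H] [BorelSpace H]
    [CompleteSpace M] [TopologicalSpace.SeparableSpace M]
    [MeasurableSpace M] [BorelSpace M]
    (κ : ℝ) (hκ : κ ∈ Set.Ioo (0 : ℝ) 1) (N β : ℝ) (hN : 0 < N) (hβ : 0 < β) :
    ∃ C > (0 : ℝ), ∀ ν₁ ν₂ ν₃ : Measure (H × M),
      IsProbabilityMeasure ν₁ → IsProbabilityMeasure ν₂ → IsProbabilityMeasure ν₃ →
      Wd ν₁ ν₃ (dEps κ N (β / 2)) ≤
        ENNReal.ofReal C * (Wd ν₁ ν₂ (dEps κ N β) + Wd ν₂ ν₃ (dEps κ N β)) := by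
  refine ⟨√(1 + Real.exp (β / (2 * N ^ 2))), by positivity, fun ν₁ ν₂ ν₃ _ _ _ => ?_⟩
  exact Wd_le_mul_add continuous_dEps.measurable (by positivity)
    (dEps_half_le ⟨hκ.1.le, hκ.2.le⟩ hN hβ.le)

end
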